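/- Let X have at least 3 elements, T a t-norm, N a nonempty society, P a strict preference operator, and f an aggregation function on LP_T satisfying independence of irrelevant alternatives that is strongly Paretian with respect to P (hence also weakly Paretian). Let 𝔘 be the ultrafilter of decisive coalitions of f. Then for every U ∈ 𝔘, every profile 𝐑 ∈ LP_T^N and all x, y ∈ X: P_{f(𝐑)}(x,y) ≥ inf_{i∈U} P_{R_i}(x,y). -/
import Mathlib


open unitInterval

/-- A t-norm on the unit interval: commutative, associative, monotone, with 1 as neutral element. -/
def IsTnorm (T : I → I → I) : Prop :=
  (∀ a b, T a b = T b a) ∧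
  (∀ a b c, T (T a b) c = T a (T b c)) ∧
  (∀ a b c d, a ≤ b → c ≤ d → T a c ≤ T b d) ∧
  (∀ a, T a 1 = a)

/-- A fuzzy preference `R` is reflexive. -/
def FuzzyRefl {X : Type*} (R : X → X → I) : Prop := ∀ x, R x x = 1

/-- A fuzzy preference `R` is `T`-transitive. -/
def FuzzyTrans {X : Type*} (T : I → I → I) (R : X → X → I) : Prop :=
  ∀ x y z, T (R x y) (R y z) ≤ R x z

/-- A fuzzy preference `R` is complete. -/
def FuzzyComplete {X : Type*} (R : X → X → I) : Prop := ∀ x y, R x y = 1 ∨ R y x = 1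

/-- A `T`-linear fuzzy preference: reflexive, complete and `T`-transitive. -/
def IsLinearPref {X : Type*} (T : I → I → I) (R : X → X → I) : Prop :=
  FuzzyRefl R ∧ FuzzyComplete R ∧ FuzzyTrans T R

/-- The set of `T`-linear preferences on `X`. -/
def LinPref (T : I → I → I) (X : Type*) := {R : X → X → I // IsLinearPref T R}

/-- The strict part of the associated preorder of `R`: `x ≻_R y` iff `R x y = 1` and `R y x < 1`. -/
def SP {X : Type*} (R : X → X → I) (x y : X) : Prop := R x y = 1 ∧ R y x < 1

/-- Independence of irrelevant alternatives for an aggregation function. -/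
def IIA {X N : Type*} {T : I → I → I} (f : (N → LinPref T X) → LinPref T X) : Prop :=
  ∀ (R R' : N → LinPref T X) (x y : X),
    (∀ i, (R i).1 x y = (R' i).1 x y ∧ (R i).1 y x = (R' i).1 y x) →
    (f R).1 x y = (f R').1 x y ∧ (f R).1 y x = (f R').1 y x

/-- Weak Pareto: if every individual strictly prefers `x` to `y`
(`R_i(x,y) > R_i(y,x)`), so does the society. -/
def WeakPareto {X N : Type*} {T : I → I → I} (f : (N → LinPref T X) → LinPref T X) : Prop :=
  ∀ (R : N → LinPref T X) (x y : X),
    (∀ i, (R i).1 y x < (R i).1 x y) → (f R).1 y x < (f R).1 x y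

/-- A coalition `C` is decisive for `f`. -/
def Decisive {X N : Type*} {T : I → I → I} (f : (N → LinPref T X) → LinPref T X)
    (C : Set N) : Prop :=
  ∀ (x y : X) (R : N → LinPref T X),
    (∀ i ∈ C, SP (R i).1 x y) → (∀ i ∈ Cᶜ, SP (R i).1 y x) → SP (f R).1 x y

/-- A strict preference operator: assigns to each fuzzy preference `R` a fuzzy strict
preference `P R`, satisfying the three properties required in the paper. -/
def IsSPO {X : Type*} (P : (X → X → I) → X → X → I) : Prop :=
  (∀ (R : X → X → I) (x y : X), R x y = 1 → R y x = 0 → P R x y = 1) ∧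
  (∀ (R : X → X → I) (x y : X), 0 < P R x y ↔ R y x < R x y) ∧
  (∀ (R R' : X → X → I) (x y a b : X),
    R' a b ≤ R x y → R y x ≤ R' b a → P R' a b ≤ P R x y)

/-- Strong Pareto with respect to a strict preference operator `P`. -/
def StrongPareto {X N : Type*} {T : I → I → I} (P : (X → X → I) → X → X → I)
    (f : (N → LinPref T X) → LinPref T X) : Prop :=
  ∀ (R : N → LinPref T X) (x y : X),
    ⨅ i : N, (P (R i).1 x y : ℝ) ≤ (P (f R).1 x y : ℝ)

namespace StrongParetoAux

open unitInterval

lemma T_one_left {T : I → I → I} (hT : IsTnorm T) (a : I) : T 1 a = a := by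
  rw [hT.1]; exact hT.2.2.2 a

lemma T_le_left {T : I → I → I} (hT : IsTnorm T) (a b : I) : T a b ≤ a := by
  have := hT.2.2.1 a a b 1 le_rfl unitInterval.le_one'
  rwa [hT.2.2.2] at this

lemma T_le_right {T : I → I → I} (hT : IsTnorm T) (a b : I) : T a b ≤ b := by
  rw [hT.1]; exact T_le_left hT b a

variable {X : Type*} [DecidableEq X]

/-- level function: `x` on top, `z` in the middle, everything else at the bottom. -/
def lvl (x z t : X) : ℕ := if t = x then 2 else if t = z then 1 else 0

/-- Preference for members of `U`: `x ≻ z ≻ y`(= rest), all reversed degrees equal `r`. -/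
def SA (x z : X) (r : I) : X → X → I := fun a b => if lvl x z a < lvl x z b then r else 1

/-- Preference for nonmembers: `z` strictly on top, the rest as in `R0`. -/
def SB (z : X) (R0 : X → X → I) : X → X → I := fun a b =>
  if a = z then 1 else if b = z then 0 else R0 a b

lemma SA_lin {T : I → I → I} (hT : IsTnorm T) (x z : X) (r : I) :
    IsLinearPref T (SA x z r) := by
  refine ⟨fun a => by simp [SA], fun a b => ?_, fun a b c => ?_⟩
  · unfold SA
    rcases lt_or_ge (lvl x z a) (lvl x z b) with h | h
    · right; rw [if_neg (by omega)]
    · left; rw [if_neg (by omega)]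
  · unfold SA
    by_cases hac : lvl x z a < lvl x z c
    · rw [if_pos hac]
      by_cases hab : lvl x z a < lvl x z b
      · rw [if_pos hab]; exact T_le_left hT _ _
      · rw [if_neg hab, if_pos (by omega)]; exact T_le_right hT _ _
    · rw [if_neg hac]; exact unitInterval.le_one'

lemma SB_lin {T : I → I → I} (hT : IsTnorm T) (z : X) (R0 : X → X → I)
    (h : IsLinearPref T R0) : IsLinearPref T (SB z R0) := by
  obtain ⟨hr, hc, ht⟩ := h
  refine ⟨fun a => ?_, fun a b => ?_, fun a b c => ?_⟩
  · unfold SB; split_ifs <;> simp_all [hr a]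
  · unfold SB
    by_cases ha : a = z
    · left; rw [if_pos ha]
    · by_cases hb : b = z
      · right; rw [if_pos hb]
      · rw [if_neg ha, if_neg hb, if_neg hb, if_neg ha]; exact hc a b
  · by_cases ha : a = z
    · have e : SB z R0 a c = 1 := by simp [SB, ha]
      rw [e]; exact unitInterval.le_one'
    · by_cases hb : b = z
      · have e : SB z R0 a b = 0 := by simp [SB, ha, hb]
        exact le_trans (le_trans (T_le_left hT _ _) (le_of_eq e)) unitInterval.nonneg'
      · by_cases hcz : c = z
        · have e : SB z R0 b c = 0 := by simp [SB, hb, hcz]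
          have e2 : SB z R0 a c = 0 := by simp [SB, ha, hcz]
          rw [e2]
          exact le_trans (T_le_right hT _ _) (le_of_eq e)
        · have e1 : SB z R0 a b = R0 a b := by simp [SB, ha, hb]
          have e2 : SB z R0 b c = R0 b c := by simp [SB, hb, hcz]
          have e3 : SB z R0 a c = R0 a c := by simp [SB, ha, hcz]
          rw [e1, e2, e3]; exact ht a b c

end StrongParetoAux


/-- Theorem `Qimposibility`, second part: if `f` is moreover strongly Paretian
w.r.t. a strict preference operator `P`, then for every decisive coalition `U` (i.e. every
member of the ultrafilter of decisive coalitions) we have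
`P_{f(𝐑)}(x,y) ≥ inf_{i ∈ U} P_{R_i}(x,y)`. -/
theorem strong_pareto_on_ultrafilter {X N : Type*}
    (hX : ∃ x y z : X, x ≠ y ∧ x ≠ z ∧ y ≠ z) [Nonempty N]
    (T : I → I → I) (hT : IsTnorm T)
    (P : (X → X → I) → X → X → I) (hP : IsSPO P)
    (f : (N → LinPref T X) → LinPref T X)
    (hIIA : IIA f) (hSP : StrongPareto P f) (hWP : WeakPareto f)
    (𝔘 : Ultrafilter N) (h𝔘 : ∀ C : Set N, C ∈ 𝔘 ↔ Decisive f C) :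
    ∀ U ∈ 𝔘, ∀ (R : N → LinPref T X) (x y : X),
      ⨅ i : U, (P (R i).1 x y : ℝ) ≤ (P (f R).1 x y : ℝ) := by
  intro U hU R x y
  classical
  open StrongParetoAux in
  by_cases hc0 : (⨅ i : U, (P (R i).1 x y : ℝ)) ≤ 0
  · exact hc0.trans (P (f R).1 x y).2.1
  push_neg at hc0
  set c : ℝ := ⨅ i : U, (P (R i).1 x y : ℝ) with hc
  have hbdd : BddBelow (Set.range fun i : U => (P (R i).1 x y : ℝ)) := by
    refine ⟨0, ?_⟩
    rintro _ ⟨i, rfl⟩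
    exact (P (R i).1 x y).2.1
  have hle : ∀ i : N, i ∈ U → c ≤ (P (R i).1 x y : ℝ) := fun i hi => ciInf_le hbdd ⟨i, hi⟩
  have hPpos : ∀ i ∈ U, (0 : I) < P (R i).1 x y := by
    intro i hi
    have h := lt_of_lt_of_le hc0 (hle i hi)
    exact_mod_cast h
  have hstrict : ∀ i ∈ U, (R i).1 y x < (R i).1 x y := fun i hi => (hP.2.1 _ x y).1 (hPpos i hi)
  have hxy1 : ∀ i ∈ U, (R i).1 x y = 1 := by
    intro i hi
    rcases (R i).2.2.1 x y with h | h
    · exact h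
    · have h' := hstrict i hi
      rw [h] at h'
      exact absurd h' (not_lt.mpr unitInterval.le_one')
  obtain ⟨i0, hi0⟩ := Ultrafilter.nonempty_of_mem hU
  have hxy : x ≠ y := by
    rintro rfl
    exact lt_irrefl _ (hstrict i0 hi0)
  obtain ⟨a, b, d, hab, had, hbd⟩ := hX
  have hzex : ∃ z : X, z ≠ x ∧ z ≠ y := by
    by_contra h
    push_neg at h
    have ha := h a; have hb := h b; have hd := h d
    by_cases h1 : a = x <;> by_cases h2 : b = x <;> by_cases h3 : d = x <;> simp_all
  obtain ⟨z, hzx, hzy⟩ := hzex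
  -- level computations
  have lx : lvl x z x = 2 := by simp [lvl]
  have lz : lvl x z z = 1 := by simp [lvl, hzx]
  have ly : lvl x z y = 0 := by simp [lvl, Ne.symm hxy, Ne.symm hzy]
  -- SA value computations
  have hAxy : ∀ r : I, SA x z r x y = 1 := fun r => by simp [SA, lx, ly]
  have hAyx : ∀ r : I, SA x z r y x = r := fun r => by simp [SA, lx, ly]
  have hAxz : ∀ r : I, SA x z r x z = 1 := fun r => by simp [SA, lx, lz]
  have hAzx : ∀ r : I, SA x z r z x = r := fun r => by simp [SA, lx, lz]
  have hAzy : ∀ r : I, SA x z r z y = 1 := fun r => by simp [SA, lz, ly]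
  have hAyz : ∀ r : I, SA x z r y z = r := fun r => by simp [SA, lz, ly]
  -- SB value computations
  have hBxy : ∀ R0 : X → X → I, SB z R0 x y = R0 x y := fun R0 => by
    simp [SB, Ne.symm hzx, Ne.symm hzy]
  have hByx : ∀ R0 : X → X → I, SB z R0 y x = R0 y x := fun R0 => by
    simp [SB, Ne.symm hzx, Ne.symm hzy]
  have hBzx : ∀ R0 : X → X → I, SB z R0 z x = 1 := fun R0 => by simp [SB]
  have hBxz : ∀ R0 : X → X → I, SB z R0 x z = 0 := fun R0 => by simp [SB, Ne.symm hzx]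
  have hBzy : ∀ R0 : X → X → I, SB z R0 z y = 1 := fun R0 => by simp [SB]
  have hByz : ∀ R0 : X → X → I, SB z R0 y z = 0 := fun R0 => by simp [SB, Ne.symm hzy]
  -- the auxiliary profile
  set S : N → LinPref T X := fun i =>
    if i ∈ U then ⟨SA x z ((R i).1 y x), SA_lin hT x z _⟩
    else ⟨SB z (R i).1, SB_lin hT z _ (R i).2⟩ with hSdef
  have hSU : ∀ i ∈ U, (S i).1 = SA x z ((R i).1 y x) := by
    intro i hi; simp [hSdef, hi]
  have hSU' : ∀ i ∉ U, (S i).1 = SB z (R i).1 := by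
    intro i hi; simp [hSdef, hi]
  have hone : (0 : I) < 1 := lt_of_le_of_ne unitInterval.nonneg' (fun h => absurd (congrArg Subtype.val h) (by norm_num))
  -- S agrees with R on {x,y}
  have hagree : ∀ i, (S i).1 x y = (R i).1 x y ∧ (S i).1 y x = (R i).1 y x := by
    intro i
    by_cases hi : i ∈ U
    · rw [hSU i hi, hAxy, hAyx, hxy1 i hi]
      exact ⟨rfl, rfl⟩
    · rw [hSU' i hi, hBxy, hByx]
      exact ⟨rfl, rfl⟩
  -- decisiveness of U on (x,z)
  have hD : Decisive f U := (h𝔘 U).1 hU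
  have hSPxz : SP (f S).1 x z := by
    refine hD x z S (fun i hi => ?_) (fun i hi => ?_)
    · rw [hSU i hi]
      refine ⟨hAxz _, ?_⟩
      rw [hAzx]
      calc (R i).1 y x < (R i).1 x y := hstrict i hi
        _ ≤ 1 := unitInterval.le_one'
    · rw [hSU' i hi]
      refine ⟨hBzx _, ?_⟩
      rw [hBxz]
      exact hone
  have hfxz : (f S).1 x z = 1 := hSPxz.1
  -- transitivity consequences for f S
  have h1 : (f S).1 z y ≤ (f S).1 x y := by
    have h := (f S).2.2.2 x z y
    rwa [hfxz, T_one_left hT] at h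
  have h2 : (f S).1 y x ≤ (f S).1 y z := by
    have h := (f S).2.2.2 y x z
    rwa [hfxz, hT.2.2.2] at h
  have hPmono : P (f S).1 z y ≤ P (f S).1 x y := hP.2.2 (f S).1 (f S).1 x y z y h1 h2
  -- strong Pareto on (z, y)
  have hcle : c ≤ ⨅ i : N, (P (S i).1 z y : ℝ) := by
    refine le_ciInf fun i => ?_
    by_cases hi : i ∈ U
    · have hmono : P (R i).1 x y ≤ P (S i).1 z y := by
        refine hP.2.2 (S i).1 (R i).1 z y x y ?_ ?_
        · rw [hSU i hi, hAzy]; exact unitInterval.le_one'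
        · rw [hSU i hi, hAyz]
      exact (hle i hi).trans hmono
    · have hPone : P (S i).1 z y = 1 := by
        refine hP.1 _ z y ?_ ?_
        · rw [hSU' i hi]; exact hBzy _
        · rw [hSU' i hi]; exact hByz _
      rw [hPone]
      exact (hle i0 hi0).trans (P (R i0).1 x y).2.2
  -- IIA transfer from S to R on {x,y}
  have hiia := hIIA S R x y hagree
  have hfinal : P (f S).1 x y ≤ P (f R).1 x y :=
    hP.2.2 (f R).1 (f S).1 x y x y (le_of_eq hiia.1) (le_of_eq hiia.2.symm)
  calc c ≤ ⨅ i : N, (P (S i).1 z y : ℝ) := hcle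
    _ ≤ (P (f S).1 z y : ℝ) := hSP S z y
    _ ≤ (P (f S).1 x y : ℝ) := by exact_mod_cast hPmono
    _ ≤ (P (f R).1 x y : ℝ) := by exact_mod_cast hfinal
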